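/- Let σ ∈ ℓ²(ℤ₊) be orthogonal to R^m ω for every m ≥ 0, where ω_n = λ^n/n! for some λ ∈ ℂ and R is the right shift. Then σ = 0. -/

import Mathlib

/-!
Orthogonality to `Rˢω` says that `s ↦ ∑ₖ λᵏ/k! · conj σ(s+k)` vanishes identically, i.e. that
`e^{λS}` kills the bounded sequence `conj σ`, where `S = R*` is the backward shift. On bounded
sequences the double series for `e^{-λS} e^{λS}` converges absolutely, and the binomial identity
`∑_{i+j=n} (-λ)ⁱ/i! · λʲ/j! = (-λ+λ)ⁿ/n! = δₙ₀` shows that it is the identity, so `σ = 0`.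
-/

open Finset Finset.HasAntidiagonal
open scoped ComplexConjugate Nat

theorem Summable.tsum_eq_tsum_sum_antidiagonal {A α : Type*} [AddCommMonoid A] [HasAntidiagonal A]
    [AddCommGroup α] [UniformSpace α] [IsUniformAddGroup α] [CompleteSpace α] [T0Space α]
    {F : A × A → α} (hF : Summable F) :
    ∑' p, F p = ∑' n, ∑ kl ∈ antidiagonal n, F kl := by
  rw [← sigmaAntidiagonalEquivProd.tsum_eq F]
  exact (sigmaAntidiagonalEquivProd.summable_iff.mpr hF).tsum_sigma.trans
    (tsum_congr fun n => (antidiagonal n).tsum_subtype F)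

theorem tsum_mul_tsum_mul_add_eq_tsum_sum_antidiagonal_mul {R : Type*} [NormedRing R]
    [CompleteSpace R] {c d f : ℕ → R} {C : ℝ} (hc : Summable (‖c ·‖)) (hd : Summable (‖d ·‖))
    (hf : ∀ n, ‖f n‖ ≤ C) :
    ∑' j, c j * ∑' k, d k * f (j + k) =
      ∑' n, (∑ kl ∈ antidiagonal n, c kl.1 * d kl.2) * f n := by
  set F : ℕ × ℕ → R := fun p => c p.1 * (d p.2 * f (p.1 + p.2))
  have hinner (j : ℕ) : Summable fun k => d k * f (j + k) :=
    .of_norm_bounded (hd.mul_right C) fun k => norm_mul_le_of_le le_rfl (hf _)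
  have hF : Summable F := by
    refine .of_norm_bounded ((hc.mul_of_nonneg hd (fun _ => norm_nonneg _)
      fun _ => norm_nonneg _).mul_right C) fun p => ?_
    rw [mul_assoc]
    exact norm_mul_le_of_le le_rfl (norm_mul_le_of_le le_rfl (hf _))
  calc ∑' j, c j * ∑' k, d k * f (j + k)
      = ∑' j, ∑' k, F (j, k) := tsum_congr fun j => ((hinner j).tsum_mul_left (c j)).symm
    _ = ∑' n, ∑ kl ∈ antidiagonal n, F kl := by
      rw [← hF.tsum_prod, hF.tsum_eq_tsum_sum_antidiagonal]
    _ = ∑' n, (∑ kl ∈ antidiagonal n, c kl.1 * d kl.2) * f n :=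
      tsum_congr fun n => by
        rw [sum_mul]
        refine sum_congr rfl fun kl hkl => ?_
        rw [← mem_antidiagonal.mp hkl, mul_assoc]

theorem sum_antidiagonal_pow_div_factorial_mul {K : Type*} [Field K] [CharZero K] (a b : K)
    (n : ℕ) :
    ∑ kl ∈ antidiagonal n, a ^ kl.1 / kl.1 ! * (b ^ kl.2 / kl.2 !) = (a + b) ^ n / n ! := by
  rw [(Commute.all a b).add_pow', sum_div]
  refine sum_congr rfl fun kl hkl => ?_
  rw [← mem_antidiagonal.mp hkl, nsmul_eq_mul, Nat.cast_add_choose]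
  field_simp [Nat.factorial_ne_zero]

theorem summable_norm_pow_div_factorial {𝕜 : Type*} [RCLike 𝕜] (a : 𝕜) :
    Summable fun k => ‖a ^ k / (k ! : 𝕜)‖ := by
  simpa [norm_div, norm_pow, RCLike.norm_natCast] using Real.summable_pow_div_factorial ‖a‖

theorem eq_zero_of_forall_tsum_pow_div_factorial_mul_eq_zero {𝕜 : Type*} [RCLike 𝕜] {f : ℕ → 𝕜}
    {C : ℝ} (hf : ∀ n, ‖f n‖ ≤ C) (a : 𝕜) (h : ∀ s, ∑' k, a ^ k / k ! * f (s + k) = 0) :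
    f = 0 := by
  funext m
  calc f m = ∑' n, (-a + a) ^ n / n ! * f (m + n) := by
        rw [neg_add_cancel, tsum_eq_single 0 fun n hn => by simp [zero_pow hn]]
        simp
    _ = ∑' n, (∑ kl ∈ antidiagonal n, (-a) ^ kl.1 / kl.1 ! * (a ^ kl.2 / kl.2 !)) * f (m + n) := by
        simp only [sum_antidiagonal_pow_div_factorial_mul]
    _ = ∑' j, (-a) ^ j / j ! * ∑' k, a ^ k / k ! * f (m + (j + k)) :=
        (tsum_mul_tsum_mul_add_eq_tsum_sum_antidiagonal_mul (f := fun n => f (m + n))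
          (summable_norm_pow_div_factorial _) (summable_norm_pow_div_factorial _)
          fun n => hf (m + n)).symm
    _ = 0 := by simp [← add_assoc, h]

def rightShift {E : Type*} [Zero E] (m : ℕ) (f : ℕ → E) : ℕ → E :=
  fun n => if n < m then 0 else f (n - m)

theorem Memℓp.rightShift {E : Type*} [NormedAddCommGroup E] {p : ENNReal} (hp : 0 < p.toReal)
    {f : ℕ → E} (hf : Memℓp f p) (m : ℕ) : Memℓp (rightShift m f) p := by
  rw [memℓp_gen_iff hp] at hf ⊢
  rw [← summable_nat_add_iff m]
  simpa [_root_.rightShift] using hf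

theorem lp.inner_eq_tsum_of_eq_rightShift {𝕜 E : Type*} [RCLike 𝕜] [NormedAddCommGroup E]
    [InnerProductSpace 𝕜 E] {m : ℕ} (σ x y : lp (fun _ : ℕ => E) 2) (hx : ⇑x = rightShift m y) :
    inner 𝕜 σ x = ∑' k, inner 𝕜 (σ (k + m)) (y k) := by
  rw [lp.inner_eq_tsum, ← (lp.summable_inner (𝕜 := 𝕜) σ x).sum_add_tsum_nat_add m]
  simp only [hx, rightShift]
  rw [sum_eq_zero fun i hi => by simp [mem_range.mp hi], zero_add]
  simp

/-- If σ ∈ ℓ²(ℤ₊) is orthogonal to every right shift Rᵐω of the sequence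
ωₙ = λⁿ/n!, then σ = 0. -/
theorem stmt_9 (lam : ℂ) (σ ω : lp (fun _ : ℕ => ℂ) 2)
    (hω : ∀ n : ℕ, ω n = lam ^ n / (Nat.factorial n : ℂ))
    (horth : ∀ (m : ℕ) (x : lp (fun _ : ℕ => ℂ) 2),
      (∀ n : ℕ, x n = if n < m then 0 else ω (n - m)) → (inner ℂ σ x : ℂ) = 0) :
    σ = 0 := by
  have hshift (s : ℕ) : ∑' k, lam ^ k / k ! * conj (σ (s + k)) = 0 := by
    let x : lp (fun _ : ℕ => ℂ) 2 := ⟨rightShift s ω, (lp.memℓp ω).rightShift (by simp) s⟩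
    have hx := horth s x fun _ => rfl
    rw [lp.inner_eq_tsum_of_eq_rightShift σ x ω rfl] at hx
    simpa [hω, add_comm, mul_comm] using hx
  have hconj := eq_zero_of_forall_tsum_pow_div_factorial_mul_eq_zero
    (fun n => (RCLike.norm_conj _).trans_le (lp.norm_apply_le_norm two_ne_zero σ n)) lam hshift
  ext n
  simpa using congr_fun hconj n
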